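/- Let (Ω, ℱ, P) be a probability space, let N ≥ 2, and let A₁, …, A_N be events. Let C ≥ 1 and γ > 0, and suppose that for every integer n ≥ 1, every k with k + n ≤ N, every event D in σ(A₁, …, A_k), and every event B in σ(A_{k+n}, …, A_N), one has |P(D ∩ B) − P(D)·P(B)| ≤ C·n^{−γ}. Then for every θ ∈ (0, 1], P(⋃_{k=1}^N A_k) ≥ 1 − exp(−(1/2)·S_N·N^{−θ}) − 2C·N^{1−θ(γ+1)}, where S_N := ∑_{k=1}^N P(A_k). -/

import Mathlib

/-!
With lag `m = ⌈N^θ⌉`, the indices `1, …, N` split into `m` residue classes mod `m`, and by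
pigeonhole one of them carries at least `S_N / m ≥ S_N N^{-θ} / 2` of the mass. Along that class
consecutive indices are `m` apart, so peeling off the largest index one at a time and applying
the mixing bound at lag `m` gives
`P(no A_k in the class) ≤ ∏ (1 - P(A_k)) + #class · C m^{-γ}`.
The product is at most `exp(-S_N N^{-θ} / 2)`, and `#class ≤ N/m + 1 ≤ 2 N^{1-θ}`.
-/

open MeasureTheory

section Mixing

variable {Ω : Type*} [MeasurableSpace Ω] (P : Measure Ω)

/-- The restricted strong-mixing coefficient of `A 1, …, A N` at lag `n` is at most `ε`. -/
def AlphaMixingAtLag (A : ℕ → Set Ω) (N n : ℕ) (ε : ℝ) : Prop :=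
  ∀ k, 1 ≤ k → k + n ≤ N →
    ∀ D : Set Ω, MeasurableSet[MeasurableSpace.generateFrom (A '' Set.Icc 1 k)] D →
    ∀ B : Set Ω, MeasurableSet[MeasurableSpace.generateFrom (A '' Set.Icc (k + n) N)] B →
      |P.real (D ∩ B) - P.real D * P.real B| ≤ ε

theorem measureReal_biInter_le_prod_add [IsProbabilityMeasure P] {ι : Type*} [LinearOrder ι]
    {E : ι → Set Ω} {ε : ℝ} (hε : 0 ≤ ε) (s : Finset ι)
    (h : ∀ a ∈ s, ∀ t ⊆ s, t.Nonempty → (∀ x ∈ t, x < a) →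
      P.real ((⋂ k ∈ t, E k) ∩ E a) ≤ P.real (⋂ k ∈ t, E k) * P.real (E a) + ε) :
    P.real (⋂ k ∈ s, E k) ≤ ∏ k ∈ s, P.real (E k) + s.card * ε := by
  classical
  induction s using Finset.induction_on_max with
  | empty => simp
  | insert a t hlt ih =>
    have hat : a ∉ t := fun hat => lt_irrefl a (hlt a hat)
    have ih := ih fun b hb u hu =>
      h b (Finset.mem_insert_of_mem hb) u (hu.trans (Finset.subset_insert a t))
    rw [Finset.set_biInter_insert, Set.inter_comm, Finset.prod_insert hat,
      Finset.card_insert_of_notMem hat]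
    push_cast
    rcases t.eq_empty_or_nonempty with rfl | ht
    · simpa using hε
    have hstep := h a (Finset.mem_insert_self a t) t (Finset.subset_insert a t) ht hlt
    have hEa : P.real (E a) ≤ 1 := measureReal_le_one
    have hprod := mul_le_mul_of_nonneg_right ih (measureReal_nonneg (μ := P) (s := E a))
    have herr : t.card * ε * P.real (E a) ≤ t.card * ε :=
      mul_le_of_le_one_right (by positivity) hEa
    nlinarith

theorem measureReal_biInter_compl_le_of_spaced [IsProbabilityMeasure P] {A : ℕ → Set Ω}
    {N m : ℕ} {ε : ℝ} (hA : ∀ k ∈ Finset.Icc 1 N, MeasurableSet (A k))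
    (hmix : AlphaMixingAtLag P A N m ε) (hε : 0 ≤ ε) {s : Finset ℕ}
    (hs : s ⊆ Finset.Icc 1 N)
    (hgap : ∀ x ∈ s, ∀ a ∈ s, x < a → x + m ≤ a) :
    P.real (⋂ k ∈ s, (A k)ᶜ) ≤ ∏ k ∈ s, (1 - P.real (A k)) + s.card * ε := by
  rw [Finset.prod_congr rfl fun k hk => (probReal_compl_eq_one_sub (hA k (hs hk))).symm]
  refine measureReal_biInter_le_prod_add P hε s fun a ha t hts ⟨x, hx⟩ hlt => ?_
  have hxa := hgap x (hts hx) a ha (hlt x hx)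
  have hx1 := (Finset.mem_Icc.1 (hs (hts hx))).1
  have haN := (Finset.mem_Icc.1 (hs ha)).2
  have hD : MeasurableSet[MeasurableSpace.generateFrom (A '' Set.Icc 1 (a - m))]
      (⋂ k ∈ t, (A k)ᶜ) := by
    refine Finset.measurableSet_biInter _ fun k hk => ?_
    have hka := hgap k (hts hk) a ha (hlt k hk)
    have hk1 := (Finset.mem_Icc.1 (hs (hts hk))).1
    exact (MeasurableSpace.measurableSet_generateFrom
      (Set.mem_image_of_mem A (show k ∈ Set.Icc 1 (a - m) from ⟨hk1, by omega⟩))).compl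
  have hB : MeasurableSet[MeasurableSpace.generateFrom (A '' Set.Icc (a - m + m) N)] (A a)ᶜ :=
    (MeasurableSpace.measurableSet_generateFrom
      (Set.mem_image_of_mem A (show a ∈ Set.Icc (a - m + m) N from ⟨by omega, haN⟩))).compl
  linarith [(abs_le.1 (hmix (a - m) (by omega) (by omega) _ hD _ hB)).2]

theorem one_le_measureReal_biUnion_add_biInter_compl [IsProbabilityMeasure P] {ι : Type*}
    (A : ι → Set Ω) {s t : Finset ι} (hts : t ⊆ s) :
    1 ≤ P.real (⋃ k ∈ s, A k) + P.real (⋂ k ∈ t, (A k)ᶜ) := by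
  have hcover : Set.univ ⊆ (⋃ k ∈ s, A k) ∪ ⋂ k ∈ t, (A k)ᶜ := fun ω _ => by
    by_cases hω : ω ∈ ⋃ k ∈ s, A k
    · exact Or.inl hω
    · simp only [Set.mem_iUnion, not_exists] at hω
      exact Or.inr (Set.mem_iInter₂.2 fun k hk => hω k (hts hk))
  simpa using (measureReal_mono hcover).trans (measureReal_union_le (μ := P) _ _)

end Mixing

theorem add_le_of_lt_of_mod_eq {x a m : ℕ} (hxa : x < a) (hmod : x % m = a % m) :
    x + m ≤ a := by
  have hdvd : m ∣ a - x := Nat.dvd_of_mod_eq_zero (Nat.sub_mod_eq_zero_of_mod_eq hmod.symm)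
  have := Nat.le_of_dvd (Nat.sub_pos_of_lt hxa) hdvd
  omega

theorem exists_div_le_sum_filter_mod_eq (s : Finset ℕ) (w : ℕ → ℝ) {m : ℕ} (hm : 0 < m) :
    ∃ b, (∑ k ∈ s, w k) / m ≤ ∑ k ∈ s with k % m = b, w k := by
  obtain ⟨b, -, hb⟩ := Finset.exists_le_sum_fiber_of_maps_to_of_nsmul_le_sum (w := w)
    (fun k _ => Finset.mem_range.2 (Nat.mod_lt k hm)) ⟨0, Finset.mem_range.2 hm⟩
    (by rw [Finset.card_range, nsmul_eq_mul, mul_div_cancel₀ _ (by positivity)])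
  exact ⟨b, hb⟩

theorem card_filter_mod_eq_le {s : Finset ℕ} {N : ℕ} (hs : ∀ k ∈ s, k ≤ N) (m b : ℕ) :
    (s.filter (· % m = b)).card ≤ N / m + 1 := by
  calc (s.filter (· % m = b)).card ≤ (Finset.range (N / m + 1)).card := by
        refine Finset.card_le_card_of_injOn (· / m) (fun k hk => ?_) fun k hk l hl hkl => ?_
        · have := hs k (Finset.mem_filter.1 hk).1
          simpa [Nat.lt_succ_iff] using Nat.div_le_div_right this
        · rw [← Nat.mod_add_div k m, ← Nat.mod_add_div l m, (Finset.mem_filter.1 hk).2,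
            (Finset.mem_filter.1 hl).2]
          simp only at hkl
          rw [hkl]
    _ = N / m + 1 := Finset.card_range _

theorem Real.prod_one_sub_le_exp_neg_sum {ι : Type*} (s : Finset ι) {p : ι → ℝ}
    (hp : ∀ i ∈ s, p i ≤ 1) : ∏ i ∈ s, (1 - p i) ≤ Real.exp (-∑ i ∈ s, p i) := by
  rw [← Finset.sum_neg_distrib, Real.exp_sum]
  exact Finset.prod_le_prod (fun i hi => sub_nonneg.2 (hp i hi))
    fun i _ => Real.one_sub_le_exp_neg _

theorem div_add_one_mul_rpow_neg_le {N m θ γ C : ℝ} (hN : 1 ≤ N) (hθ : θ ≤ 1)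
    (hγ : 0 ≤ γ) (hC : 0 ≤ C) (hm : N ^ θ ≤ m) :
    (N / m + 1) * (C * m ^ (-γ)) ≤ 2 * C * N ^ (1 - θ * (γ + 1)) := by
  have hN0 : 0 < N := zero_lt_one.trans_le hN
  have hNθ : 0 < N ^ θ := Real.rpow_pos_of_pos hN0 θ
  have hcount : N / m + 1 ≤ 2 * N ^ (1 - θ) := by
    have h1 : N / m ≤ N ^ (1 - θ) := by
      rw [Real.rpow_sub hN0, Real.rpow_one]
      gcongr
    have h2 : 1 ≤ N ^ (1 - θ) := Real.one_le_rpow hN (by linarith)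
    linarith
  have hdecay : m ^ (-γ) ≤ N ^ (-(θ * γ)) := by
    rw [Real.rpow_neg (hNθ.le.trans hm), Real.rpow_neg hN0.le, Real.rpow_mul hN0.le]
    gcongr
  calc (N / m + 1) * (C * m ^ (-γ)) ≤ 2 * N ^ (1 - θ) * (C * N ^ (-(θ * γ))) :=
        mul_le_mul hcount (by gcongr) (mul_nonneg hC (Real.rpow_nonneg (hNθ.le.trans hm) _))
          (by positivity)
    _ = 2 * C * N ^ (1 - θ * (γ + 1)) := by
        rw [mul_mul_mul_comm, mul_comm (N ^ _), mul_assoc, ← Real.rpow_add hN0]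
        ring_nf

/-- Proposition (polynomial α-mixing spacings, parametrised form): if the finite
restricted strong-mixing coefficient at every lag `n` is at most `C·n^{−γ}`, then for
every `θ ∈ (0, 1]`,
`P(⋃ₖ A k) ≥ 1 − exp(−(1/2)·S_N·N^{−θ}) − 2C·N^{1−θ(γ+1)}`. -/
theorem polynomial_alpha_mixing_bound
    {Ω : Type*} [MeasurableSpace Ω] (P : Measure Ω) [IsProbabilityMeasure P]
    (N : ℕ) (hN : 2 ≤ N)
    (A : ℕ → Set Ω) (hA : ∀ k ∈ Finset.Icc 1 N, MeasurableSet (A k))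
    (C γ : ℝ) (hC : 1 ≤ C) (hγ : 0 < γ)
    (hmix : ∀ n : ℕ, 1 ≤ n → ∀ k, 1 ≤ k → k + n ≤ N →
      ∀ D : Set Ω,
        MeasurableSet[MeasurableSpace.generateFrom (A '' Set.Icc 1 k)] D →
      ∀ B : Set Ω,
        MeasurableSet[MeasurableSpace.generateFrom (A '' Set.Icc (k + n) N)] B →
          |(P (D ∩ B)).toReal - (P D).toReal * (P B).toReal| ≤ C * (n : ℝ) ^ (-γ)) :
    ∀ θ : ℝ, 0 < θ → θ ≤ 1 →
      1 - Real.exp (-(1 / 2) * (∑ k ∈ Finset.Icc 1 N, (P (A k)).toReal) *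
            (N : ℝ) ^ (-θ)) -
          2 * C * (N : ℝ) ^ (1 - θ * (γ + 1)) ≤
        (P (⋃ k ∈ Finset.Icc 1 N, A k)).toReal := by
  intro θ hθ hθ1
  set S := ∑ k ∈ Finset.Icc 1 N, P.real (A k)
  have hN1 : (1 : ℝ) ≤ N := by exact_mod_cast (by omega : 1 ≤ N)
  have hNθ : 1 ≤ (N : ℝ) ^ θ := Real.one_le_rpow hN1 hθ.le
  set m := ⌈(N : ℝ) ^ θ⌉₊
  have hθm : (N : ℝ) ^ θ ≤ m := Nat.le_ceil _
  have hm2 : (m : ℝ) ≤ 2 * (N : ℝ) ^ θ := by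
    linarith [Nat.ceil_lt_add_one (zero_le_one.trans hNθ)]
  have hm0 : 0 < m := by exact_mod_cast zero_lt_one.trans_le (hNθ.trans hθm)
  obtain ⟨b, hb⟩ := exists_div_le_sum_filter_mod_eq (Finset.Icc 1 N) (fun k => P.real (A k)) hm0
  set s := (Finset.Icc 1 N).filter (· % m = b)
  have hs : s ⊆ Finset.Icc 1 N := Finset.filter_subset _ _
  have hclass := measureReal_biInter_compl_le_of_spaced P hA (hmix m hm0) (by positivity) hs
    fun x hx a ha hxa => add_le_of_lt_of_mod_eq hxa
      ((Finset.mem_filter.1 hx).2.trans (Finset.mem_filter.1 ha).2.symm)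
  have hcard : (s.card : ℝ) ≤ N / m + 1 :=
    (Nat.cast_le.2 (card_filter_mod_eq_le (fun k hk => (Finset.mem_Icc.1 hk).2) m b)).trans
      (by push_cast; linarith [Nat.cast_div_le (m := N) (n := m) (α := ℝ)])
  have hexp : ∏ k ∈ s, (1 - P.real (A k)) ≤ Real.exp (-(1 / 2) * S * (N : ℝ) ^ (-θ)) := by
    refine (Real.prod_one_sub_le_exp_neg_sum s fun k _ => measureReal_le_one).trans ?_
    rw [Real.exp_le_exp, Real.rpow_neg (by positivity)]
    have : S / (2 * (N : ℝ) ^ θ) ≤ S / m := by gcongr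
    linarith [show -(1 / 2) * S * ((N : ℝ) ^ θ)⁻¹ = -(S / (2 * (N : ℝ) ^ θ)) by ring]
  have herr : s.card * (C * (m : ℝ) ^ (-γ)) ≤ 2 * C * (N : ℝ) ^ (1 - θ * (γ + 1)) :=
    (mul_le_mul_of_nonneg_right hcard (by positivity)).trans
      (div_add_one_mul_rpow_neg_le hN1 hθ1 hγ.le (by linarith) hθm)
  have hunion := one_le_measureReal_biUnion_add_biInter_compl P A hs
  show 1 - Real.exp (-(1 / 2) * S * _) - _ ≤ P.real _
  linarith
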